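/- Let G be a finite graph and τ a threshold function. Let u be a vertex with τ(u)=1 such that τ(v)=deg_G(v) for every neighbour v of u. If X is a non-monotone target set for (G,τ), then there exist (not necessarily distinct) neighbours v₁, v₂ of u with v₁ ∈ X and N_G(v₂) ⊆ X. -/

import Mathlib

open Finset

/-- The non-monotone activation process on `(G, τ)` starting with `X`:
`X_t = {u : |N_G(u) ∩ X_{t-1}| ≥ τ(u)}` for `t ≥ 1`. -/
def activation {V : Type*} (G : SimpleGraph V) [Fintype V] [DecidableEq V]
    [DecidableRel G.Adj] (τ : V → ℤ) (X : Finset V) : ℕ → Finset V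
  | 0 => X
  | t + 1 => Finset.univ.filter
      (fun u => τ u ≤ ((G.neighborFinset u ∩ activation G τ X t).card : ℤ))

/-- `X` is a non-monotone target set for `(G, τ)`. -/
def IsTargetSet {V : Type*} (G : SimpleGraph V) [Fintype V] [DecidableEq V]
    [DecidableRel G.Adj] (τ : V → ℤ) (X : Finset V) : Prop :=
  ∃ t₀ : ℕ, ∀ t ≥ t₀, activation G τ X t = Finset.univ

/-- Open neighbourhood of a set of vertices: `N_G(S)`. -/
def openNbhd {V : Type*} (G : SimpleGraph V) (S : Set V) : Set V :=
  {v | v ∉ S ∧ ∃ u ∈ S, G.Adj u v}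

/-- Closed neighbourhood of a set of vertices: `N_G[S]`. -/
def closedNbhd {V : Type*} (G : SimpleGraph V) (S : Set V) : Set V :=
  S ∪ openNbhd G S

/-- Closed neighbourhood, as a finset. -/
def closedNbhdFinset {V : Type*} (G : SimpleGraph V) [Fintype V] [DecidableEq V]
    [DecidableRel G.Adj] (U : Finset V) : Finset V :=
  U ∪ Finset.univ.filter (fun v => ∃ u ∈ U, G.Adj u v)

/-- `U` is the vertex set of a connected component of the subgraph of `G` induced by `S`. -/
def IsComponentOf {V : Type*} (G : SimpleGraph V) (S U : Set V) : Prop :=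
  U ⊆ S ∧ U.Nonempty ∧ (G.induce U).Connected ∧
    ∀ u ∈ U, ∀ v ∈ S, G.Adj u v → v ∈ U

/-- The subgraph of `G` induced by `S`, as a graph on the subtype `S`. -/
def restrict {V : Type*} (G : SimpleGraph V) (S : Set V) : SimpleGraph S where
  Adj a b := G.Adj a b
  symm := ⟨fun _ _ h => G.symm.symm _ _ h⟩
  loopless := ⟨fun a h => G.loopless.irrefl a h⟩

instance {V : Type*} (G : SimpleGraph V) (S : Set V) [h : DecidableRel G.Adj] :
    DecidableRel (restrict G S).Adj := fun a b => h a b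

section Activation

variable {V : Type*} [Fintype V] [DecidableEq V] {G : SimpleGraph V} [DecidableRel G.Adj]
  {τ : V → ℤ} {X : Finset V}

theorem mem_activation_succ_iff {v : V} {t : ℕ} :
    v ∈ activation G τ X (t + 1) ↔
      τ v ≤ ((G.neighborFinset v ∩ activation G τ X t).card : ℤ) := by
  simp [activation]

theorem exists_adj_mem_activation_of_mem_succ {v : V} {t : ℕ} (hτ : 0 < τ v)
    (hv : v ∈ activation G τ X (t + 1)) : ∃ w, G.Adj v w ∧ w ∈ activation G τ X t := by
  have hpos : 0 < (G.neighborFinset v ∩ activation G τ X t).card := by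
    have := mem_activation_succ_iff.mp hv
    omega
  obtain ⟨w, hw⟩ := card_pos.mp hpos
  rw [mem_inter, SimpleGraph.mem_neighborFinset] at hw
  exact ⟨w, hw⟩

theorem neighborFinset_subset_activation_of_mem_succ {v : V} {t : ℕ}
    (hτ : (G.degree v : ℤ) ≤ τ v) (hv : v ∈ activation G τ X (t + 1)) :
    G.neighborFinset v ⊆ activation G τ X t := by
  have hcard : (G.neighborFinset v).card ≤ (G.neighborFinset v ∩ activation G τ X t).card := by
    have := mem_activation_succ_iff.mp hv
    rw [G.card_neighborFinset_eq_degree]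
    omega
  rw [← eq_of_subset_of_card_le inter_subset_left hcard]
  exact inter_subset_right

/-- `u` activates only through a neighbour, and that neighbour only when its whole
neighbourhood, `u` included, was active: so `u` is active at `t + 2` only if it was at `t`. -/
theorem mem_activation_of_mem_add_two {u : V} (hu : 0 < τ u)
    (hnb : ∀ v, G.Adj u v → (G.degree v : ℤ) ≤ τ v) {t : ℕ}
    (h : u ∈ activation G τ X (t + 2)) : u ∈ activation G τ X t := by
  obtain ⟨v, huv, hv⟩ := exists_adj_mem_activation_of_mem_succ hu h
  exact neighborFinset_subset_activation_of_mem_succ (hnb v huv) hv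
    (G.mem_neighborFinset v u |>.mpr huv.symm)

theorem mem_activation_of_isTargetSet {u : V} (hu : 0 < τ u)
    (hnb : ∀ v, G.Adj u v → (G.degree v : ℤ) ≤ τ v) (hX : IsTargetSet G τ X) (t : ℕ) :
    u ∈ activation G τ X t := by
  obtain ⟨t₀, ht₀⟩ := hX
  have hdescend : ∀ k, u ∈ activation G τ X (t + 2 * k) → u ∈ activation G τ X t := by
    intro k
    induction k with
    | zero => exact id
    | succ k ih => exact fun h => ih (mem_activation_of_mem_add_two hu hnb h)
  exact hdescend t₀ (ht₀ (t + 2 * t₀) (by omega) ▸ mem_univ u)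

end Activation

theorem stmt_10 {V : Type*} [Fintype V] [DecidableEq V] (G : SimpleGraph V)
    [DecidableRel G.Adj] (τ : V → ℤ) (u : V)
    (hu : τ u = 1)
    (hnb : ∀ v, G.Adj u v → τ v = (G.degree v : ℤ))
    (X : Finset V) (hX : IsTargetSet G τ X) :
    ∃ v₁ v₂ : V, G.Adj u v₁ ∧ G.Adj u v₂ ∧ v₁ ∈ X ∧ G.neighborFinset v₂ ⊆ X := by
  have hpos : 0 < τ u := by omega
  have hdeg : ∀ v, G.Adj u v → (G.degree v : ℤ) ≤ τ v := fun v h => (hnb v h).ge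
  have hactive := mem_activation_of_isTargetSet hpos hdeg hX
  obtain ⟨v₁, huv₁, hv₁⟩ := exists_adj_mem_activation_of_mem_succ hpos (hactive 1)
  obtain ⟨v₂, huv₂, hv₂⟩ := exists_adj_mem_activation_of_mem_succ hpos (hactive 2)
  exact ⟨v₁, v₂, huv₁, huv₂, hv₁, neighborFinset_subset_activation_of_mem_succ (hdeg v₂ huv₂) hv₂⟩
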